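/- Let B : (0, ∞) → ℂ be measurable such that t ↦ e^{−λt} B(t) is integrable on (0, ∞) for every real λ > 0. Let (α_j)_{j≥0} be a strictly increasing sequence of real numbers with α_0 > −1, let (β_j)_{j≥0} be nonnegative integers and (b_j)_{j≥0} complex numbers, and assume that for every N ≥ 0 there exist constants C_N, δ_N > 0 with |B(t) − Σ_{j<N} b_j t^{α_j} (log t)^{β_j}| ≤ C_N · t^{α_N} |log t|^{β_N} for all 0 < t < δ_N. Then for every N ≥ 0, as λ → +∞ through the reals, ∫₀^∞ e^{−λt} B(t) dt = Σ_{j<N} b_j · D^{β_j}[a ↦ Γ(a+1) λ^{−a−1}](α_j) + O(λ^{−α_N−1} (log λ)^{β_N}), where D^{β}[·](α) denotes the β-th complex derivative at a = α and λ^{−a−1} = exp(−(a+1) log λ). -/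

import Mathlib

/-!
Subtracting the first `N` terms leaves a remainder `R = O(t ^ α N * |log t| ^ β N)` near `0`.
The terms are transformed exactly: the Laplace transform of `t ^ c * (log t) ^ k` is the Mellin
transform of `(log t) ^ k * exp (-λ t)` at `c + 1`, which is the `k`-th derivative in `s` of the
Mellin transform `Γ(s) λ ^ (-s)` of `exp (-λ t)`. For the remainder, split the integral at `δ`:
on `(0, δ)` the substitution `u = λ t` together with `|log t| ≤ log λ * (|log u| + 1)` gives
`O(λ ^ (-c - 1) * (log λ) ^ k)`, while the part beyond `δ` decays like `exp (-δ λ)`.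
-/

open MeasureTheory Asymptotics Filter Set Topology

structure MellinRegular {E : Type*} [NormedAddCommGroup E] [NormedSpace ℂ E] (f : ℝ → E) :
    Prop where
  locallyIntegrableOn : LocallyIntegrableOn f (Ioi 0)
  isBigO_atTop : ∀ a : ℝ, f =O[atTop] (· ^ (-a))
  isBigO_nhdsGT_zero : ∀ b : ℝ, 0 < b → f =O[𝓝[>] 0] (· ^ (-b))

namespace MellinRegular

variable {E : Type*} [NormedAddCommGroup E] [NormedSpace ℂ E] {f : ℝ → E}

theorem log_smul (hf : MellinRegular f) : MellinRegular (fun t => Real.log t • f t) where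
  locallyIntegrableOn := hf.locallyIntegrableOn.continuousOn_smul isOpen_Ioi.isLocallyClosed
    (Real.continuousOn_log.mono fun _ ht => ne_of_gt ht)
  isBigO_atTop a := by
    refine ((isLittleO_log_rpow_atTop one_pos).isBigO.smul (hf.isBigO_atTop (a + 1))).congr'
      EventuallyEq.rfl ?_
    filter_upwards [eventually_gt_atTop 0] with t ht
    rw [smul_eq_mul, ← Real.rpow_add ht]
    ring_nf
  isBigO_nhdsGT_zero b hb := by
    refine ((isLittleO_log_rpow_nhdsGT_zero (neg_lt_zero.2 (half_pos hb))).isBigO.smul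
      (hf.isBigO_nhdsGT_zero (b / 2) (half_pos hb))).congr' EventuallyEq.rfl ?_
    filter_upwards [self_mem_nhdsWithin] with t (ht : 0 < t)
    rw [smul_eq_mul, ← Real.rpow_add ht]
    ring_nf

theorem log_pow_smul (hf : MellinRegular f) (k : ℕ) :
    MellinRegular (fun t => Real.log t ^ k • f t) := by
  induction k with
  | zero => simpa only [pow_zero, one_smul] using hf
  | succ k ih => simpa only [smul_smul, ← pow_succ'] using ih.log_smul

theorem mellinConvergent (hf : MellinRegular f) {s : ℂ} (hs : 0 < s.re) :
    MellinConvergent f s :=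
  mellinConvergent_of_isBigO_rpow hf.locallyIntegrableOn (hf.isBigO_atTop _) (lt_add_one s.re)
    (hf.isBigO_nhdsGT_zero _ (half_pos hs)) (half_lt_self hs)

theorem hasDerivAt_mellin (hf : MellinRegular f) {s : ℂ} (hs : 0 < s.re) :
    HasDerivAt (mellin f) (mellin (fun t => Real.log t • f t) s) s :=
  (mellin_hasDerivAt_of_isBigO_rpow hf.locallyIntegrableOn (hf.isBigO_atTop _) (lt_add_one s.re)
    (hf.isBigO_nhdsGT_zero _ (half_pos hs)) (half_lt_self hs)).2

theorem iteratedDeriv_mellin (hf : MellinRegular f) (k : ℕ) {s : ℂ} (hs : 0 < s.re) :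
    iteratedDeriv k (mellin f) s = mellin (fun t => Real.log t ^ k • f t) s := by
  induction k generalizing f with
  | zero => simp
  | succ k ih =>
    have hderiv : deriv (mellin f) =ᶠ[𝓝 s] mellin (fun t => Real.log t • f t) := by
      filter_upwards [(isOpen_lt continuous_const Complex.continuous_re).mem_nhds hs] with z hz
      exact (hf.hasDerivAt_mellin hz).deriv
    rw [iteratedDeriv_succ', hderiv.iteratedDeriv_eq, ih hf.log_smul]
    simp only [smul_smul, ← pow_succ]

end MellinRegular

theorem norm_cexp_neg_ofReal_mul (lam t : ℝ) :
    ‖Complex.exp (-(lam : ℂ) * t)‖ = Real.exp (-(lam * t)) := by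
  rw [Complex.norm_exp]
  simp

theorem mellinRegular_exp_neg_mul {lam : ℝ} (hlam : 0 < lam) :
    MellinRegular (fun t : ℝ => Complex.exp (-(lam : ℂ) * t)) where
  locallyIntegrableOn := (by fun_prop : Continuous _).continuousOn.locallyIntegrableOn
    measurableSet_Ioi
  isBigO_atTop a := by
    rw [← isBigO_norm_left]
    simp only [norm_cexp_neg_ofReal_mul]
    simpa only [neg_mul] using
      (isLittleO_exp_neg_mul_rpow_atTop hlam (-a)).isBigO
  isBigO_nhdsGT_zero b hb := by
    refine IsBigO.of_bound 1 ?_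
    filter_upwards [Ioo_mem_nhdsGT one_pos] with t ⟨ht0, ht1⟩
    rw [norm_cexp_neg_ofReal_mul, one_mul, Real.norm_of_nonneg (Real.rpow_nonneg ht0.le _)]
    calc Real.exp (-(lam * t)) ≤ 1 := Real.exp_le_one_iff.2 (by nlinarith)
      _ ≤ t ^ (-b) := Real.one_le_rpow_of_pos_of_le_one_of_nonpos ht0 ht1.le (by linarith)

theorem mellin_exp_neg_mul {lam : ℝ} (hlam : 0 < lam) {s : ℂ} (hs : 0 < s.re) :
    mellin (fun t : ℝ => Complex.exp (-(lam : ℂ) * t)) s =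
      Complex.Gamma s * (lam : ℂ) ^ (-s) := by
  have hint := Complex.integral_cpow_mul_exp_neg_mul_Ioi hs hlam
  rw [one_div, Complex.inv_cpow _ _
      (by simp [Complex.arg_ofReal_of_nonneg hlam.le, Real.pi_ne_zero.symm]),
    ← Complex.cpow_neg, mul_comm] at hint
  rw [← hint, mellin]
  simp only [smul_eq_mul, neg_mul]

theorem iteratedDeriv_Gamma_mul_cpow_neg {lam : ℝ} (hlam : 0 < lam) (k : ℕ) {s : ℂ}
    (hs : 0 < s.re) :
    iteratedDeriv k (fun s : ℂ => Complex.Gamma s * (lam : ℂ) ^ (-s)) s =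
      mellin (fun t : ℝ => Real.log t ^ k • Complex.exp (-(lam : ℂ) * t)) s := by
  have hmellin : (fun s : ℂ => Complex.Gamma s * (lam : ℂ) ^ (-s)) =ᶠ[𝓝 s]
      mellin (fun t : ℝ => Complex.exp (-(lam : ℂ) * t)) := by
    filter_upwards [(isOpen_lt continuous_const Complex.continuous_re).mem_nhds hs] with z hz
    exact (mellin_exp_neg_mul hlam hz).symm
  rw [hmellin.iteratedDeriv_eq, (mellinRegular_exp_neg_mul hlam).iteratedDeriv_mellin k hs]

theorem cpow_smul_log_pow_smul_cexp {t : ℝ} (ht : 0 < t) (lam c : ℝ) (k : ℕ) :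
    (t : ℂ) ^ ((c : ℂ) + 1 - 1) • (Real.log t ^ k • Complex.exp (-(lam : ℂ) * t)) =
      Complex.exp (-(lam : ℂ) * t) * (((t ^ c : ℝ) : ℂ) * (Real.log t : ℂ) ^ k) := by
  rw [add_sub_cancel_right, Complex.ofReal_cpow ht.le, Complex.real_smul, smul_eq_mul]
  push_cast
  ring

theorem integrableOn_cexp_mul_rpow_mul_log_pow {lam : ℝ} (hlam : 0 < lam) (k : ℕ) {c : ℝ}
    (hc : -1 < c) :
    IntegrableOn (fun t : ℝ => Complex.exp (-(lam : ℂ) * t) *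
      (((t ^ c : ℝ) : ℂ) * (Real.log t : ℂ) ^ k)) (Ioi 0) :=
  (((mellinRegular_exp_neg_mul hlam).log_pow_smul k).mellinConvergent
    (s := (c : ℂ) + 1) (by simp; linarith)).congr_fun
    (fun _ ht => cpow_smul_log_pow_smul_cexp ht lam c k) measurableSet_Ioi

theorem integral_cexp_mul_rpow_mul_log_pow {lam : ℝ} (hlam : 0 < lam) (k : ℕ) {c : ℝ}
    (hc : -1 < c) :
    ∫ t in Ioi (0 : ℝ),
        Complex.exp (-(lam : ℂ) * t) * (((t ^ c : ℝ) : ℂ) * (Real.log t : ℂ) ^ k) =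
      iteratedDeriv k (fun a : ℂ => Complex.Gamma (a + 1) * (lam : ℂ) ^ (-(a + 1))) c := by
  rw [congrFun
      (iteratedDeriv_comp_add_const k (fun s : ℂ => Complex.Gamma s * (lam : ℂ) ^ (-s)) 1),
    iteratedDeriv_Gamma_mul_cpow_neg hlam k (by simp; linarith), mellin]
  exact setIntegral_congr_fun measurableSet_Ioi fun t (ht : 0 < t) =>
    (cpow_smul_log_pow_smul_cexp ht lam c k).symm

theorem integrableOn_exp_mul_rpow_mul_abs_log_pow {lam : ℝ} (hlam : 0 < lam) (k : ℕ) {c : ℝ}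
    (hc : -1 < c) :
    IntegrableOn (fun t : ℝ => Real.exp (-(lam * t)) * (t ^ c * |Real.log t| ^ k)) (Ioi 0) := by
  refine IntegrableOn.congr_fun (integrableOn_cexp_mul_rpow_mul_log_pow hlam k hc).norm
    (fun t (ht : 0 < t) => ?_) measurableSet_Ioi
  simp only [norm_mul, norm_pow, norm_cexp_neg_ofReal_mul, Complex.norm_real, Real.norm_eq_abs,
    abs_of_nonneg (Real.rpow_nonneg ht.le c)]

theorem integrableOn_exp_mul_rpow_mul_abs_log_add_one_pow {lam : ℝ} (hlam : 0 < lam) (k : ℕ)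
    {c : ℝ} (hc : -1 < c) :
    IntegrableOn (fun t : ℝ => Real.exp (-(lam * t)) * (t ^ c * (|Real.log t| + 1) ^ k))
      (Ioi 0) := by
  simp_rw [add_pow, one_pow, mul_one, Finset.mul_sum]
  exact integrable_finsetSum _ fun i _ =>
    IntegrableOn.congr_fun
      ((integrableOn_exp_mul_rpow_mul_abs_log_pow hlam i hc).const_mul (k.choose i : ℝ))
      (fun _ _ => by ring) measurableSet_Ioi

theorem abs_log_le_log_mul_abs_log_mul_add_one {lam t : ℝ} (hlam : 0 < lam)
    (hlog : 1 ≤ Real.log lam) (ht : 0 < t) :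
    |Real.log t| ≤ Real.log lam * (|Real.log (lam * t)| + 1) := by
  have hsplit : Real.log t = Real.log (lam * t) - Real.log lam := by
    rw [Real.log_mul hlam.ne' ht.ne']; ring
  calc |Real.log t| ≤ |Real.log (lam * t)| + |Real.log lam| := hsplit ▸ abs_sub _ _
    _ = |Real.log (lam * t)| + Real.log lam := by rw [abs_of_pos (a := Real.log lam) (by linarith)]
    _ ≤ Real.log lam * (|Real.log (lam * t)| + 1) := by
      nlinarith [abs_nonneg (Real.log (lam * t))]

theorem integral_exp_mul_rpow_mul_abs_log_pow_isBigO {c : ℝ} (hc : -1 < c) (k : ℕ) :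
    (fun lam : ℝ => ∫ t in Ioi (0 : ℝ), Real.exp (-(lam * t)) * (t ^ c * |Real.log t| ^ k))
      =O[atTop] fun lam => lam ^ (-c - 1) * Real.log lam ^ k := by
  set g : ℝ → ℝ := fun u => Real.exp (-u) * (u ^ c * (|Real.log u| + 1) ^ k)
  have hg : IntegrableOn g (Ioi 0) := by
    simpa only [one_mul] using integrableOn_exp_mul_rpow_mul_abs_log_add_one_pow one_pos k hc
  refine IsBigO.of_bound (∫ u in Ioi (0 : ℝ), g u) ?_
  filter_upwards [eventually_ge_atTop (Real.exp 1)] with lam hlam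
  have hlam0 : 0 < lam := (Real.exp_pos 1).trans_le hlam
  have hlog : 1 ≤ Real.log lam := (Real.le_log_iff_exp_le hlam0).2 hlam
  have hpt : ∀ t ∈ Ioi (0 : ℝ), Real.exp (-(lam * t)) * (t ^ c * |Real.log t| ^ k) ≤
      lam ^ (-c) * Real.log lam ^ k * g (lam * t) := by
    intro t (ht : 0 < t)
    have hrpow : t ^ c = lam ^ (-c) * (lam * t) ^ c := by
      rw [Real.mul_rpow hlam0.le ht.le, ← mul_assoc, ← Real.rpow_add hlam0, neg_add_cancel,
        Real.rpow_zero, one_mul]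
    have hpow : |Real.log t| ^ k ≤ (Real.log lam * (|Real.log (lam * t)| + 1)) ^ k :=
      pow_le_pow_left₀ (abs_nonneg _) (abs_log_le_log_mul_abs_log_mul_add_one hlam0 hlog ht) k
    calc Real.exp (-(lam * t)) * (t ^ c * |Real.log t| ^ k)
        ≤ Real.exp (-(lam * t)) * (t ^ c * (Real.log lam * (|Real.log (lam * t)| + 1)) ^ k) := by
          gcongr
      _ = lam ^ (-c) * Real.log lam ^ k * g (lam * t) := by rw [hrpow, mul_pow]; ring
  have hint : 0 ≤ ∫ t in Ioi (0 : ℝ), Real.exp (-(lam * t)) * (t ^ c * |Real.log t| ^ k) :=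
    setIntegral_nonneg measurableSet_Ioi fun t (ht : 0 < t) => by positivity
  rw [Real.norm_of_nonneg hint, Real.norm_of_nonneg (by positivity)]
  calc _ ≤ ∫ t in Ioi (0 : ℝ), lam ^ (-c) * Real.log lam ^ k * g (lam * t) := by
        refine integral_mono_of_nonneg ((ae_restrict_iff' measurableSet_Ioi).2
          (ae_of_all _ fun t (ht : 0 < t) => by positivity)) ?_
          ((ae_restrict_iff' measurableSet_Ioi).2 (ae_of_all _ hpt))
        exact ((integrableOn_Ioi_comp_mul_left_iff g 0 hlam0).2 (by rwa [mul_zero])).const_mul _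
    _ = lam ^ (-c) * Real.log lam ^ k * (lam⁻¹ * ∫ u in Ioi (0 : ℝ), g u) := by
        rw [integral_const_mul, integral_comp_mul_left_Ioi g 0 hlam0, mul_zero, smul_eq_mul]
    _ = (∫ u in Ioi (0 : ℝ), g u) * (lam ^ (-c - 1) * Real.log lam ^ k) := by
        rw [Real.rpow_sub hlam0, Real.rpow_one]; ring

theorem rpow_isBigO_rpow_mul_log_pow (r : ℝ) (k : ℕ) :
    (fun x : ℝ => x ^ r) =O[atTop] fun x => x ^ r * Real.log x ^ k := by
  have hlog : (fun _ : ℝ => (1 : ℝ)) =O[atTop] fun x => Real.log x ^ k := by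
    refine IsBigO.of_bound 1 ?_
    filter_upwards [Real.tendsto_log_atTop.eventually_ge_atTop 1] with x hx
    rw [norm_one, one_mul, Real.norm_of_nonneg (by positivity)]
    exact one_le_pow₀ hx
  simpa only [mul_one] using (isBigO_refl (fun x : ℝ => x ^ r) atTop).mul hlog

theorem norm_cexp_mul_le_of_norm_le_on_Ioo {R : ℝ → ℂ} {lam₀ lam δ C c t : ℝ} {k : ℕ}
    (hlam : lam₀ ≤ lam) (hC : 0 ≤ C)
    (hnear : ∀ t ∈ Ioo 0 δ, ‖R t‖ ≤ C * ‖t ^ c * |Real.log t| ^ k‖) (ht : 0 < t) :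
    ‖Complex.exp (-(lam : ℂ) * t) * R t‖ ≤
      C * (Real.exp (-(lam * t)) * (t ^ c * |Real.log t| ^ k)) +
        Real.exp (-(δ * (lam - lam₀))) * ‖Complex.exp (-(lam₀ : ℂ) * t) * R t‖ := by
  rw [norm_mul, norm_mul, norm_cexp_neg_ofReal_mul, norm_cexp_neg_ofReal_mul]
  by_cases hδ : t < δ
  · have hR := hnear t ⟨ht, hδ⟩
    rw [Real.norm_of_nonneg (by positivity)] at hR
    calc Real.exp (-(lam * t)) * ‖R t‖
        ≤ Real.exp (-(lam * t)) * (C * (t ^ c * |Real.log t| ^ k)) := by gcongr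
      _ ≤ _ := le_add_of_le_of_nonneg (by rw [mul_left_comm]) (by positivity)
  · have hexp :
        Real.exp (-(lam * t)) ≤ Real.exp (-(δ * (lam - lam₀))) * Real.exp (-(lam₀ * t)) := by
      rw [← Real.exp_add, Real.exp_le_exp]
      nlinarith
    calc Real.exp (-(lam * t)) * ‖R t‖
        ≤ Real.exp (-(δ * (lam - lam₀))) * Real.exp (-(lam₀ * t)) * ‖R t‖ := by gcongr
      _ ≤ _ := by rw [mul_assoc]; exact le_add_of_nonneg_left (by positivity)

theorem laplace_isBigO_of_isBigO_nhdsGT_zero {R : ℝ → ℂ} {lam₀ : ℝ}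
    (hR : IntegrableOn (fun t : ℝ => Complex.exp (-(lam₀ : ℂ) * t) * R t) (Ioi 0))
    {c : ℝ} (hc : -1 < c) (k : ℕ) (hR0 : R =O[𝓝[>] 0] fun t => t ^ c * |Real.log t| ^ k) :
    (fun lam : ℝ => ∫ t in Ioi (0 : ℝ), Complex.exp (-(lam : ℂ) * t) * R t) =O[atTop]
      fun lam => lam ^ (-c - 1) * Real.log lam ^ k := by
  obtain ⟨C, hC, hCR⟩ := hR0.exists_pos
  obtain ⟨δ, hδ, hnear⟩ := mem_nhdsGT_iff_exists_Ioo_subset.1 hCR.bound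
  set I : ℝ → ℝ := fun lam =>
    ∫ t in Ioi (0 : ℝ), Real.exp (-(lam * t)) * (t ^ c * |Real.log t| ^ k)
  set K : ℝ := ∫ t in Ioi (0 : ℝ), ‖Complex.exp (-(lam₀ : ℂ) * t) * R t‖
  have hle : ∀ᶠ lam : ℝ in atTop,
      ‖∫ t in Ioi (0 : ℝ), Complex.exp (-(lam : ℂ) * t) * R t‖ ≤
      C * I lam + Real.exp (-(δ * (lam - lam₀))) * K := by
    filter_upwards [eventually_ge_atTop lam₀, eventually_gt_atTop 0] with lam hlam₀ hlam
    have hI := integrableOn_exp_mul_rpow_mul_abs_log_pow hlam k hc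
    rw [← integral_const_mul, ← integral_const_mul,
      ← integral_add (hI.const_mul C) (hR.norm.const_mul _)]
    exact norm_integral_le_of_norm_le ((hI.const_mul C).add (hR.norm.const_mul _))
      ((ae_restrict_iff' measurableSet_Ioi).2 (ae_of_all _ fun t (ht : 0 < t) =>
        norm_cexp_mul_le_of_norm_le_on_Ioo hlam₀ hC.le hnear ht))
  have htail : (fun lam => Real.exp (-(δ * (lam - lam₀))) * K) =O[atTop]
      fun lam => lam ^ (-c - 1) * Real.log lam ^ k := by
    have hexp := (isLittleO_exp_neg_mul_rpow_atTop hδ (-c - 1)).isBigO.const_mul_left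
      (K * Real.exp (δ * lam₀))
    refine (hexp.congr_left fun lam => ?_).trans (rpow_isBigO_rpow_mul_log_pow _ k)
    rw [show -(δ * (lam - lam₀)) = δ * lam₀ + -δ * lam by ring, Real.exp_add]; ring
  have hnear := (integral_exp_mul_rpow_mul_abs_log_pow_isBigO hc k).const_mul_left C
  exact (IsBigO.of_bound' (hle.mono fun _ h => h.trans (Real.le_norm_self _))).trans
    (hnear.add htail)

theorem integrableOn_cexp_mul_sum_rpow_mul_log_pow {lam : ℝ} (hlam : 0 < lam) (s : Finset ℕ)
    (b : ℕ → ℂ) {α : ℕ → ℝ} (hα : ∀ j ∈ s, -1 < α j) (β : ℕ → ℕ) :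
    IntegrableOn (fun t : ℝ => Complex.exp (-(lam : ℂ) * t) *
      ∑ j ∈ s, b j * ((t ^ (α j) : ℝ) : ℂ) * (Real.log t : ℂ) ^ (β j)) (Ioi 0) := by
  simp_rw [Finset.mul_sum]
  exact integrable_finsetSum _ fun j hj => IntegrableOn.congr_fun
    ((integrableOn_cexp_mul_rpow_mul_log_pow hlam (β j) (hα j hj)).const_mul (b j))
    (fun _ _ => by ring) measurableSet_Ioi

theorem integral_cexp_mul_sum_rpow_mul_log_pow {lam : ℝ} (hlam : 0 < lam) (s : Finset ℕ)
    (b : ℕ → ℂ) {α : ℕ → ℝ} (hα : ∀ j ∈ s, -1 < α j) (β : ℕ → ℕ) :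
    ∫ t in Ioi (0 : ℝ), Complex.exp (-(lam : ℂ) * t) *
      ∑ j ∈ s, b j * ((t ^ (α j) : ℝ) : ℂ) * (Real.log t : ℂ) ^ (β j) =
    ∑ j ∈ s, b j * iteratedDeriv (β j)
      (fun a : ℂ => Complex.Gamma (a + 1) * (lam : ℂ) ^ (-(a + 1))) (α j) := by
  simp_rw [Finset.mul_sum]
  rw [integral_finsetSum _ fun j hj => IntegrableOn.congr_fun
    ((integrableOn_cexp_mul_rpow_mul_log_pow hlam (β j) (hα j hj)).const_mul (b j))
    (fun _ _ => by ring) measurableSet_Ioi]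
  refine Finset.sum_congr rfl fun j hj => ?_
  rw [← integral_cexp_mul_rpow_mul_log_pow hlam (β j) (hα j hj), ← integral_const_mul]
  congr 1 with t
  ring

theorem statement10_general (B : ℝ → ℂ)
    (hint : ∀ lam : ℝ, 0 < lam →
      MeasureTheory.IntegrableOn (fun t : ℝ => Complex.exp (-(lam : ℂ) * (t : ℂ)) * B t)
        (Set.Ioi 0))
    (α : ℕ → ℝ) (hmono : StrictMono α) (hα0 : -1 < α 0)
    (β : ℕ → ℕ) (b : ℕ → ℂ)
    (hasymp : ∀ N : ℕ, ∃ CN : ℝ, 0 < CN ∧ ∃ δN : ℝ, 0 < δN ∧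
      ∀ t : ℝ, 0 < t → t < δN →
        ‖B t - ∑ j ∈ Finset.range N,
            b j * ((t ^ (α j) : ℝ) : ℂ) * ((Real.log t : ℂ)) ^ (β j)‖ ≤
          CN * t ^ (α N) * |Real.log t| ^ (β N)) :
    ∀ N : ℕ,
      (fun lam : ℝ =>
          (∫ t in Set.Ioi (0 : ℝ), Complex.exp (-(lam : ℂ) * (t : ℂ)) * B t) -
            ∑ j ∈ Finset.range N,
              b j * iteratedDeriv (β j)
                (fun a : ℂ => Complex.Gamma (a + 1) * (lam : ℂ) ^ (-(a + 1))) ((α j : ℂ)))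
        =O[Filter.atTop] fun lam : ℝ => lam ^ (-(α N) - 1) * (Real.log lam) ^ (β N) := by
  intro N
  have hα (j : ℕ) : -1 < α j := hα0.trans_le (hmono.monotone j.zero_le)
  set P : ℝ → ℂ := fun t =>
    ∑ j ∈ Finset.range N, b j * ((t ^ (α j) : ℝ) : ℂ) * (Real.log t : ℂ) ^ (β j)
  have hP (lam : ℝ) (hlam : 0 < lam) :=
    integrableOn_cexp_mul_sum_rpow_mul_log_pow hlam (Finset.range N) b (fun j _ => hα j) β
  obtain ⟨C, -, δ, hδ, hbound⟩ := hasymp N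
  have hR0 : (fun t => B t - P t) =O[𝓝[>] 0] fun t => t ^ α N * |Real.log t| ^ β N := by
    refine IsBigO.of_bound C ?_
    filter_upwards [Ioo_mem_nhdsGT hδ] with t ⟨ht0, htδ⟩
    rw [Real.norm_of_nonneg (by positivity), ← mul_assoc]
    exact hbound t ht0 htδ
  have hR :
      IntegrableOn (fun t : ℝ => Complex.exp (-((1 : ℝ) : ℂ) * t) * (B t - P t)) (Ioi 0) :=
    IntegrableOn.congr_fun ((hint 1 one_pos).sub (hP 1 one_pos))
      (fun _ _ => (mul_sub _ _ _).symm) measurableSet_Ioi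
  refine (laplace_isBigO_of_isBigO_nhdsGT_zero hR (hα N) (β N) hR0).congr' ?_ EventuallyEq.rfl
  filter_upwards [eventually_gt_atTop 0] with lam hlam
  simp_rw [mul_sub]
  rw [integral_sub (hint lam hlam) (hP lam hlam),
    integral_cexp_mul_sum_rpow_mul_log_pow hlam (Finset.range N) b (fun j _ => hα j) β]

theorem statement10 (B : ℝ → ℂ) (hmeas : Measurable B)
    (hint : ∀ lam : ℝ, 0 < lam →
      MeasureTheory.IntegrableOn (fun t : ℝ => Complex.exp (-(lam : ℂ) * (t : ℂ)) * B t)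
        (Set.Ioi 0))
    (α : ℕ → ℝ) (hmono : StrictMono α) (hα0 : -1 < α 0)
    (β : ℕ → ℕ) (b : ℕ → ℂ)
    (hasymp : ∀ N : ℕ, ∃ CN : ℝ, 0 < CN ∧ ∃ δN : ℝ, 0 < δN ∧
      ∀ t : ℝ, 0 < t → t < δN →
        ‖B t - ∑ j ∈ Finset.range N,
            b j * ((t ^ (α j) : ℝ) : ℂ) * ((Real.log t : ℂ)) ^ (β j)‖ ≤
          CN * t ^ (α N) * |Real.log t| ^ (β N)) :
    ∀ N : ℕ,
      (fun lam : ℝ =>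
          (∫ t in Set.Ioi (0 : ℝ), Complex.exp (-(lam : ℂ) * (t : ℂ)) * B t) -
            ∑ j ∈ Finset.range N,
              b j * iteratedDeriv (β j)
                (fun a : ℂ => Complex.Gamma (a + 1) * (lam : ℂ) ^ (-(a + 1))) ((α j : ℂ)))
        =O[Filter.atTop] fun lam : ℝ => lam ^ (-(α N) - 1) * (Real.log lam) ^ (β N) :=
  statement10_general B hint α hmono hα0 β b hasymp
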